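/- arXiv:2508.00184 — 2 statements merged into one kernel-verified Lean document; each statement's English description precedes it below -/
import Mathlib

section
/- Let φ : ℝ → ℝ be an L-biLipschitz homeomorphism with inverse ψ, and suppose φ' exists almost everywhere with 1/L ≤ |φ'| ≤ L of constant sign. Define x(x̃, y) = (φ(x̃ + y) + φ(x̃ − y))/2 and ỹ(x̃, y) = (φ(x̃ + y) − φ(x̃ − y))/2, let x̃(x, y) be the inverse of x̃ ↦ x(x̃, y) for fixed y, and Ψ(x, y) = (x̃(x,y), ỹ(x̃(x,y), y)). Then Ψ : ℝ² → ℝ² is a 2L³-biLipschitz, area-preserving homeomorphism of the plane satisfying Ψ(x, 0) = (ψ(x), 0) for all x ∈ ℝ. -/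
/-!
In the variables `u = x̃ + y`, `v = x̃ - y` put `A(u, v) = ((φ u + φ v)/2, (u - v)/2) = (x, y)` and
`B(u, v) = ((u + v)/2, (φ u - φ v)/2) = (x̃, ỹ)`, so that `Ψ = B ∘ A⁻¹`. Both are instances of
`halfSumDiff f g (u, v) = ((f u + f v)/2, (g u - g v)/2)`, for `(f, g) = (φ, id)` and `(id, φ)`.

Since `φ` is monotone or antitone, `(u - u') (v - v')` and `(φ u - φ u') (φ v - φ v')` have the
same sign; together with the biLipschitz bounds on each increment, comparing the quadratic forms
`|A p - A q|²` and `|B p - B q|²` gives both bounds with constant `2L³`.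

The Jacobian of `halfSumDiff f g` is `-(f'(u) g'(v) + f'(v) g'(u))/4`, which is symmetric in `f`
and `g`. So the change of variables formula (for Lipschitz maps, which are differentiable a.e. by
Rademacher's theorem) gives `|B(S)| = |A(S)|` for every measurable `S`: `Ψ` preserves area.
-/

open Set MeasureTheory Filter Function
open scoped NNReal

lemma sq_add_add_sq_sub_le {L a b α β : ℝ} (hL : 1 ≤ L)
    (hα : α ^ 2 ≤ L ^ 2 * a ^ 2) (ha : a ^ 2 ≤ L ^ 2 * α ^ 2)
    (hβ : β ^ 2 ≤ L ^ 2 * b ^ 2) (hb : b ^ 2 ≤ L ^ 2 * β ^ 2)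
    (hsign : 0 ≤ a * b * (α * β)) :
    (a + b) ^ 2 + (α - β) ^ 2 ≤ (2 * L ^ 3) ^ 2 * ((α + β) ^ 2 + (a - b) ^ 2) := by
  have hL2 : L ^ 2 ≤ L ^ 6 := pow_le_pow_right₀ hL (by norm_num)
  have hL6 : 1 ≤ L ^ 6 := one_le_pow₀ hL
  have hsame : (0 ≤ a * b ∧ 0 ≤ α * β) ∨ (a * b ≤ 0 ∧ α * β ≤ 0) := by
    rcases lt_trichotomy (a * b) 0 with h | h | h
    · exact Or.inr ⟨h.le, nonpos_of_mul_nonneg_right hsign h⟩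
    · rcases mul_eq_zero.1 h with rfl | rfl
      · have : α = 0 := by nlinarith
        simp [this]
      · have : β = 0 := by nlinarith
        simp [this]
    · exact Or.inl ⟨h.le, nonneg_of_mul_nonneg_right hsign h⟩
  rw [show (2 * L ^ 3) ^ 2 = 4 * L ^ 6 by ring, mul_assoc]
  rcases hsame with ⟨hab, hαβ⟩ | ⟨hab, hαβ⟩
  · have hT : 0 ≤ α ^ 2 + β ^ 2 := by positivity
    calc (a + b) ^ 2 + (α - β) ^ 2 ≤ 2 * (a ^ 2 + b ^ 2) + (α ^ 2 + β ^ 2) := by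
          nlinarith [sq_nonneg (a - b)]
      _ ≤ 4 * (L ^ 6 * (α ^ 2 + β ^ 2)) := by
          nlinarith [mul_le_mul_of_nonneg_right hL2 hT, mul_le_mul_of_nonneg_right hL6 hT]
      _ ≤ 4 * (L ^ 6 * ((α + β) ^ 2 + (a - b) ^ 2)) := by
          gcongr 4 * (L ^ 6 * ?_)
          nlinarith [sq_nonneg (a - b)]
  · have hS : 0 ≤ a ^ 2 + b ^ 2 := by positivity
    calc (a + b) ^ 2 + (α - β) ^ 2 ≤ (a ^ 2 + b ^ 2) + 2 * (α ^ 2 + β ^ 2) := by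
          nlinarith [sq_nonneg (α + β)]
      _ ≤ 4 * (L ^ 6 * (a ^ 2 + b ^ 2)) := by
          nlinarith [mul_le_mul_of_nonneg_right hL2 hS, mul_le_mul_of_nonneg_right hL6 hS]
      _ ≤ 4 * (L ^ 6 * ((α + β) ^ 2 + (a - b) ^ 2)) := by
          gcongr 4 * (L ^ 6 * ?_)
          nlinarith [sq_nonneg (α + β)]

lemma LipschitzWith.sq_sub_le {K : ℝ≥0} {f : ℝ → ℝ} (hf : LipschitzWith K f) (a b : ℝ) :
    (f a - f b) ^ 2 ≤ K ^ 2 * (a - b) ^ 2 := by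
  rw [← sq_abs, ← sq_abs (a - b), ← mul_pow, ← Real.dist_eq, ← Real.dist_eq]
  exact pow_le_pow_left₀ dist_nonneg (hf.dist_le_mul a b) 2

lemma AntilipschitzWith.sq_sub_le {K : ℝ≥0} {f : ℝ → ℝ} (hf : AntilipschitzWith K f) (a b : ℝ) :
    (a - b) ^ 2 ≤ K ^ 2 * (f a - f b) ^ 2 := by
  rw [← sq_abs, ← sq_abs (f a - f b), ← mul_pow, ← Real.dist_eq, ← Real.dist_eq]
  exact pow_le_pow_left₀ dist_nonneg (hf.le_mul_dist a b) 2

lemma Monotone.sub_mul_sub_nonneg {f : ℝ → ℝ} (hf : Monotone f) (a b : ℝ) :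
    0 ≤ (a - b) * (f a - f b) := by
  rcases le_total a b with h | h
  · exact mul_nonneg_of_nonpos_of_nonpos (sub_nonpos.2 h) (sub_nonpos.2 (hf h))
  · exact mul_nonneg (sub_nonneg.2 h) (sub_nonneg.2 (hf h))

lemma sub_mul_sub_mul_map_nonneg {f : ℝ → ℝ} (hf : Monotone f ∨ Antitone f)
    (a b c d : ℝ) : 0 ≤ (a - b) * (c - d) * ((f a - f b) * (f c - f d)) := by
  rcases hf with hf | hf
  · nlinarith [mul_nonneg (hf.sub_mul_sub_nonneg a b) (hf.sub_mul_sub_nonneg c d)]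
  · have hab : 0 ≤ (a - b) * (-f a - -f b) := hf.neg.sub_mul_sub_nonneg a b
    have hcd : 0 ≤ (c - d) * (-f c - -f d) := hf.neg.sub_mul_sub_nonneg c d
    nlinarith [mul_nonneg hab hcd]

lemma Monotone.surjective_sub_comp_const_sub {f : ℝ → ℝ} (hf : Monotone f)
    (hcont : Continuous f) (hsurj : Surjective f) (c : ℝ) :
    Surjective fun u => f u - f (c - u) := by
  have htop : Tendsto f atTop atTop :=
    tendsto_atTop_atTop_of_monotone hf fun b => ⟨_, (hsurj b).choose_spec.ge⟩
  have hbot : Tendsto f atBot atBot :=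
    tendsto_atBot_atBot_of_monotone hf fun b => ⟨_, (hsurj b).choose_spec.le⟩
  have hrefl_top : Tendsto (fun u => c - u) atTop atBot := by
    simpa only [sub_eq_add_neg] using tendsto_atBot_add_const_left _ c tendsto_neg_atTop_atBot
  have hrefl_bot : Tendsto (fun u => c - u) atBot atTop := by
    simpa only [sub_eq_add_neg] using tendsto_atTop_add_const_left _ c tendsto_neg_atBot_atTop
  refine Continuous.surjective (by fun_prop) ?_ ?_
  · simpa only [sub_eq_add_neg, comp_def] using
      htop.atTop_add_atTop (tendsto_neg_atBot_atTop.comp (hbot.comp hrefl_top))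
  · simpa only [sub_eq_add_neg, comp_def] using
      hbot.atBot_add_atBot (tendsto_neg_atTop_atBot.comp (htop.comp hrefl_bot))

section ChangeOfVariables

variable {E : Type*} [NormedAddCommGroup E] [NormedSpace ℝ E] [FiniteDimensional ℝ E]
  [MeasurableSpace E] [BorelSpace E] (μ : Measure E) [μ.IsAddHaarMeasure]

theorem LipschitzWith.addHaar_image_eq_zero {K : ℝ≥0} {f : E → E} (hf : LipschitzWith K f)
    {s : Set E} (hs : μ s = 0) : μ (f '' s) = 0 := by
  set d := Module.finrank ℝ E
  have hμH : μH[d] s = 0 := by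
    have : μHE[d] s = 0 := by
      rw [Measure.isAddLeftInvariant_eq_smul (μHE[d] : Measure E) μ, Measure.smul_apply, hs,
        smul_zero]
    rw [Measure.euclideanHausdorffMeasure_def, Measure.smul_apply, smul_eq_zero] at this
    exact this.resolve_left (Measure.addHaarScalarFactor_volume_hausdorffMeasure_ne_zero d)
  have hμH_image : μH[d] (f '' s) = 0 :=
    le_antisymm ((hf.hausdorffMeasure_image_le d.cast_nonneg s).trans (by rw [hμH, mul_zero]))
      zero_le
  have hμHE_image : μHE[d] (f '' s) = 0 := by
    rw [Measure.euclideanHausdorffMeasure_def, Measure.smul_apply, hμH_image, smul_zero]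
  rw [Measure.isAddLeftInvariant_eq_smul μ (μHE[d] : Measure E), Measure.smul_apply, hμHE_image,
    smul_zero]

theorem LipschitzWith.lintegral_abs_det_fderiv_eq_addHaar_image {K : ℝ≥0} {f : E → E}
    {f' : E → E →L[ℝ] E} (hf : LipschitzWith K f) (hf' : ∀ᵐ x ∂μ, HasFDerivAt f (f' x) x)
    {s : Set E} (hs : MeasurableSet s) (hinj : InjOn f s) :
    ∫⁻ x in s, ENNReal.ofReal |(f' x).det| ∂μ = μ (f '' s) := by
  set N := toMeasurable μ {x | ¬HasFDerivAt f (f' x) x}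
  have hN : μ (s ∩ N) = 0 :=
    measure_mono_null inter_subset_right (by rw [measure_toMeasurable]; exact ae_iff.1 hf')
  have himage : μ (f '' s) = μ (f '' (s \ N)) := by
    refine le_antisymm ?_ (measure_mono (image_mono sdiff_subset))
    calc μ (f '' s) = μ (f '' (s \ N) ∪ f '' (s ∩ N)) := by rw [← image_union, sdiff_union_inter]
      _ ≤ μ (f '' (s \ N)) + μ (f '' (s ∩ N)) := measure_union_le _ _
      _ = μ (f '' (s \ N)) := by rw [hf.addHaar_image_eq_zero μ hN, add_zero]
  rw [himage, ← setLIntegral_congr (sdiff_ae_eq_self.2 hN)]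
  refine MeasureTheory.lintegral_abs_det_fderiv_eq_addHaar_image μ
    (hs.diff (measurableSet_toMeasurable _ _))
    (fun x hx => HasFDerivAt.hasFDerivWithinAt ?_) (hinj.mono sdiff_subset)
  by_contra h
  exact hx.2 (subset_toMeasurable _ _ h)

end ChangeOfVariables

lemma EuclideanSpace.dist_sq_fin_two (p q : EuclideanSpace ℝ (Fin 2)) :
    dist p q ^ 2 = (p 0 - q 0) ^ 2 + (p 1 - q 1) ^ 2 := by
  rw [EuclideanSpace.dist_sq_eq, Fin.sum_univ_two, Real.dist_eq, Real.dist_eq, sq_abs, sq_abs]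

lemma EuclideanSpace.ae_apply {ι : Type*} [Fintype ι] {P : ℝ → Prop} (h : ∀ᵐ x, P x) (i : ι) :
    ∀ᵐ p : EuclideanSpace ℝ ι, P (p i) :=
  (PiLp.volume_preserving_ofLp ι).quasiMeasurePreserving.ae
    ((Measure.quasiMeasurePreserving_eval (fun _ => volume) i).ae h)

lemma det_toEuclideanLin_toContinuousLinearMap {n : Type*} [Fintype n] [DecidableEq n]
    (M : Matrix n n ℝ) : (Matrix.toEuclideanLin M).toContinuousLinearMap.det = M.det := by
  rw [ContinuousLinearMap.det, LinearMap.coe_toContinuousLinearMap,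
    Matrix.toEuclideanLin_eq_toLin_orthonormal, LinearMap.det_toLin]

noncomputable def halfSumDiff (f g : ℝ → ℝ) (p : EuclideanSpace ℝ (Fin 2)) :
    EuclideanSpace ℝ (Fin 2) :=
  !₂[(f (p 0) + f (p 1)) / 2, (g (p 0) - g (p 1)) / 2]

@[simp] lemma halfSumDiff_apply_zero (f g : ℝ → ℝ) (p : EuclideanSpace ℝ (Fin 2)) :
    halfSumDiff f g p 0 = (f (p 0) + f (p 1)) / 2 := rfl

@[simp] lemma halfSumDiff_apply_one (f g : ℝ → ℝ) (p : EuclideanSpace ℝ (Fin 2)) :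
    halfSumDiff f g p 1 = (g (p 0) - g (p 1)) / 2 := rfl

lemma dist_halfSumDiff_sq (f g : ℝ → ℝ) (p q : EuclideanSpace ℝ (Fin 2)) :
    dist (halfSumDiff f g p) (halfSumDiff f g q) ^ 2 =
      ((f (p 0) - f (q 0) + (f (p 1) - f (q 1))) ^ 2 +
        (g (p 0) - g (q 0) - (g (p 1) - g (q 1))) ^ 2) / 4 := by
  rw [EuclideanSpace.dist_sq_fin_two]
  simp only [halfSumDiff_apply_zero, halfSumDiff_apply_one]
  ring

lemma lipschitzWith_halfSumDiff {K : ℝ≥0} {f g : ℝ → ℝ} (hf : LipschitzWith K f)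
    (hg : LipschitzWith K g) : LipschitzWith K (halfSumDiff f g) := by
  refine LipschitzWith.of_dist_le_mul fun p q => le_of_pow_le_pow_left₀ two_ne_zero
    (by positivity) ?_
  rw [mul_pow, dist_halfSumDiff_sq, EuclideanSpace.dist_sq_fin_two]
  have h0 := hf.sq_sub_le (p 0) (q 0)
  have h1 := hf.sq_sub_le (p 1) (q 1)
  have h2 := hg.sq_sub_le (p 0) (q 0)
  have h3 := hg.sq_sub_le (p 1) (q 1)
  nlinarith [sq_nonneg (f (p 0) - f (q 0) - (f (p 1) - f (q 1))),
    sq_nonneg (g (p 0) - g (q 0) + (g (p 1) - g (q 1)))]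

lemma eq_of_halfSumDiff_eq {f g : ℝ → ℝ} {p q : EuclideanSpace ℝ (Fin 2)}
    (h₁ : halfSumDiff f id p = halfSumDiff f id q) (h₂ : halfSumDiff id g p = halfSumDiff id g q) :
    p = q := by
  have e₁ := congrArg (· 1) h₁
  have e₂ := congrArg (· 0) h₂
  simp only [halfSumDiff_apply_zero, halfSumDiff_apply_one, id] at e₁ e₂
  ext i
  fin_cases i <;> simp <;> linarith

lemma halfSumDiff_id_surjective {f : ℝ → ℝ} (hf : Monotone f ∨ Antitone f)
    (hcont : Continuous f) (hsurj : Surjective f) : Surjective (halfSumDiff id f) := by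
  intro w
  obtain ⟨u, hu⟩ : ∃ u, f u - f (2 * w 0 - u) = 2 * w 1 := by
    rcases hf with hf | hf
    · exact hf.surjective_sub_comp_const_sub hcont hsurj _ _
    · obtain ⟨u, hu⟩ := hf.neg.surjective_sub_comp_const_sub hcont.neg
        (neg_surjective.comp hsurj) _ (-(2 * w 1))
      exact ⟨u, by simp only at hu; linarith⟩
  refine ⟨!₂[u, 2 * w 0 - u], ?_⟩
  ext i
  fin_cases i <;> simp [hu]

lemma hasFDerivAt_halfSumDiff {f g : ℝ → ℝ} {p : EuclideanSpace ℝ (Fin 2)} {f₀ f₁ g₀ g₁ : ℝ}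
    (hf₀ : HasDerivAt f f₀ (p 0)) (hf₁ : HasDerivAt f f₁ (p 1))
    (hg₀ : HasDerivAt g g₀ (p 0)) (hg₁ : HasDerivAt g g₁ (p 1)) :
    HasFDerivAt (halfSumDiff f g)
      (Matrix.toEuclideanLin !![f₀ / 2, f₁ / 2; g₀ / 2, -(g₁ / 2)]).toContinuousLinearMap p := by
  have h₀ := PiLp.hasFDerivAt_apply (𝕜 := ℝ) 2 p 0
  have h₁ := PiLp.hasFDerivAt_apply (𝕜 := ℝ) 2 p 1
  rw [← hasFDerivWithinAt_univ, hasFDerivWithinAt_piLp]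
  intro i
  rw [hasFDerivWithinAt_univ]
  fin_cases i
  · have h := ((hf₀.comp_hasFDerivAt p h₀).add (hf₁.comp_hasFDerivAt p h₁)).mul_const 2⁻¹
    refine h.congr_fderiv (ContinuousLinearMap.ext fun v => ?_)
    simp [Matrix.mulVec, dotProduct, Fin.sum_univ_two]
    ring
  · have h := ((hg₀.comp_hasFDerivAt p h₀).sub (hg₁.comp_hasFDerivAt p h₁)).mul_const 2⁻¹
    refine h.congr_fderiv (ContinuousLinearMap.ext fun v => ?_)
    simp [Matrix.mulVec, dotProduct, Fin.sum_univ_two]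
    ring

lemma volume_image_halfSumDiff {K : ℝ≥0} {f g : ℝ → ℝ} (hf : LipschitzWith K f)
    (hg : LipschitzWith K g) {s : Set (EuclideanSpace ℝ (Fin 2))} (hs : MeasurableSet s)
    (hinj : InjOn (halfSumDiff f g) s) :
    volume (halfSumDiff f g '' s) = ∫⁻ p in s,
      ENNReal.ofReal (|deriv f (p 0) * deriv g (p 1) + deriv f (p 1) * deriv g (p 0)| / 4) := by
  have hderiv : ∀ᵐ p : EuclideanSpace ℝ (Fin 2), HasFDerivAt (halfSumDiff f g)
      (Matrix.toEuclideanLin !![deriv f (p 0) / 2, deriv f (p 1) / 2;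
        deriv g (p 0) / 2, -(deriv g (p 1) / 2)]).toContinuousLinearMap p := by
    have hf' := hf.ae_differentiableAt (μ := volume)
    have hg' := hg.ae_differentiableAt (μ := volume)
    filter_upwards [EuclideanSpace.ae_apply hf' 0, EuclideanSpace.ae_apply hf' 1,
      EuclideanSpace.ae_apply hg' 0, EuclideanSpace.ae_apply hg' 1] with p hf₀ hf₁ hg₀ hg₁
    exact hasFDerivAt_halfSumDiff hf₀.hasDerivAt hf₁.hasDerivAt hg₀.hasDerivAt hg₁.hasDerivAt
  rw [← (lipschitzWith_halfSumDiff hf hg).lintegral_abs_det_fderiv_eq_addHaar_image volume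
    hderiv hs hinj]
  refine lintegral_congr fun p => ?_
  rw [det_toEuclideanLin_toContinuousLinearMap, Matrix.det_fin_two_of]
  congr 1
  rw [← abs_of_pos (four_pos : (0 : ℝ) < 4), ← abs_div]
  exact abs_eq_abs.2 (Or.inr (by ring))

lemma volume_image_halfSumDiff_comm {K : ℝ≥0} {f g : ℝ → ℝ} (hf : LipschitzWith K f)
    (hg : LipschitzWith K g) {s : Set (EuclideanSpace ℝ (Fin 2))} (hs : MeasurableSet s)
    (hfg : InjOn (halfSumDiff f g) s) (hgf : InjOn (halfSumDiff g f) s) :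
    volume (halfSumDiff f g '' s) = volume (halfSumDiff g f '' s) := by
  rw [volume_image_halfSumDiff hf hg hs hfg, volume_image_halfSumDiff hg hf hs hgf]
  refine lintegral_congr fun p => ?_
  rw [add_comm, mul_comm (deriv f (p 1)), mul_comm (deriv f (p 0))]

section BiLipschitz

variable {K : ℝ≥0} {φ : ℝ → ℝ}

lemma dist_halfSumDiff_id_left_le (hK : 1 ≤ (K : ℝ)) (hlip : LipschitzWith K φ)
    (hanti : AntilipschitzWith K φ) (hφ : Monotone φ ∨ Antitone φ)
    (p q : EuclideanSpace ℝ (Fin 2)) :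
    dist (halfSumDiff id φ p) (halfSumDiff id φ q) ≤
      2 * K ^ 3 * dist (halfSumDiff φ id p) (halfSumDiff φ id q) := by
  refine le_of_pow_le_pow_left₀ two_ne_zero (by positivity) ?_
  rw [mul_pow, dist_halfSumDiff_sq, dist_halfSumDiff_sq, ← mul_div_assoc]
  gcongr ?_ / 4
  exact sq_add_add_sq_sub_le hK (hlip.sq_sub_le _ _) (hanti.sq_sub_le _ _) (hlip.sq_sub_le _ _)
    (hanti.sq_sub_le _ _) (sub_mul_sub_mul_map_nonneg hφ _ _ _ _)

lemma dist_halfSumDiff_id_right_le (hK : 1 ≤ (K : ℝ)) (hlip : LipschitzWith K φ)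
    (hanti : AntilipschitzWith K φ) (hφ : Monotone φ ∨ Antitone φ)
    (p q : EuclideanSpace ℝ (Fin 2)) :
    dist (halfSumDiff φ id p) (halfSumDiff φ id q) ≤
      2 * K ^ 3 * dist (halfSumDiff id φ p) (halfSumDiff id φ q) := by
  refine le_of_pow_le_pow_left₀ two_ne_zero (by positivity) ?_
  rw [mul_pow, dist_halfSumDiff_sq, dist_halfSumDiff_sq, ← mul_div_assoc]
  gcongr ?_ / 4
  -- negating the increments of the second coordinate exchanges the two quadratic forms
  have key := sq_add_add_sq_sub_le hK (a := p 0 - q 0) (b := -(p 1 - q 1))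
    (α := φ (p 0) - φ (q 0)) (β := -(φ (p 1) - φ (q 1))) (hlip.sq_sub_le _ _)
    (hanti.sq_sub_le _ _) (by simpa only [neg_sq] using hlip.sq_sub_le _ _)
    (by simpa only [neg_sq] using hanti.sq_sub_le _ _)
    (by simpa only [neg_mul, mul_neg, neg_neg] using
      sub_mul_sub_mul_map_nonneg hφ (p 0) (q 0) (p 1) (q 1))
  simp only [id]
  linear_combination key

lemma injective_halfSumDiff_id_left (hK : 1 ≤ (K : ℝ)) (hlip : LipschitzWith K φ)
    (hanti : AntilipschitzWith K φ) (hφ : Monotone φ ∨ Antitone φ) :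
    Injective (halfSumDiff id φ) := fun p q h => eq_of_halfSumDiff_eq (f := φ)
  (dist_le_zero.1 (by simpa [h] using dist_halfSumDiff_id_right_le hK hlip hanti hφ p q)) h

lemma injective_halfSumDiff_id_right (hK : 1 ≤ (K : ℝ)) (hlip : LipschitzWith K φ)
    (hanti : AntilipschitzWith K φ) (hφ : Monotone φ ∨ Antitone φ) :
    Injective (halfSumDiff φ id) := fun p q h => eq_of_halfSumDiff_eq (g := φ) h
  (dist_le_zero.1 (by simpa [h] using dist_halfSumDiff_id_left_le hK hlip hanti hφ p q))

lemma volume_image_halfSumDiff_id_left_comp (hK : 1 ≤ (K : ℝ)) (hlip : LipschitzWith K φ)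
    (hanti : AntilipschitzWith K φ) (hφ : Monotone φ ∨ Antitone φ)
    {σ : EuclideanSpace ℝ (Fin 2) → EuclideanSpace ℝ (Fin 2)}
    (hσ : LeftInverse (halfSumDiff φ id) σ) {s : Set (EuclideanSpace ℝ (Fin 2))}
    (hs : MeasurableSet s) : volume ((halfSumDiff id φ ∘ σ) '' s) = volume s := by
  have hid : LipschitzWith K (id : ℝ → ℝ) := LipschitzWith.id.weaken (by exact_mod_cast hK)
  have hA_inj := injective_halfSumDiff_id_right hK hlip hanti hφ
  have hσs : MeasurableSet (σ '' s) := by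
    rw [image_eq_preimage_of_inverse hσ fun p => hA_inj (hσ _)]
    exact (lipschitzWith_halfSumDiff hlip hid).continuous.measurable hs
  rw [image_comp, volume_image_halfSumDiff_comm hid hlip hσs
    (injective_halfSumDiff_id_left hK hlip hanti hφ).injOn hA_inj.injOn, ← image_comp,
    hσ.comp_eq_id, image_id]

end BiLipschitz

/-- Tukia-type plane extension: given an `L`-biLipschitz monotone homeomorphism `φ` of `ℝ`
with inverse `ψ`, the map `Ψ(x,y) = (x̃(x,y), ỹ(x̃(x,y),y))` built from
`x(x̃,y) = (φ(x̃+y)+φ(x̃−y))/2`, `ỹ(x̃,y) = (φ(x̃+y)−φ(x̃−y))/2` is a `2L³`-biLipschitz,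
area-preserving homeomorphism of the plane with `Ψ(x,0) = (ψ(x),0)`. -/
theorem stmt6 (L : ℝ) (hL : 1 ≤ L) (φ ψ : ℝ → ℝ)
    (hbl : ∀ s t : ℝ, L⁻¹ * |s - t| ≤ |φ s - φ t| ∧ |φ s - φ t| ≤ L * |s - t|)
    (hmono : Monotone φ ∨ Antitone φ)
    (hinv₁ : Function.LeftInverse ψ φ) (hinv₂ : Function.RightInverse ψ φ)
    (xt : ℝ → ℝ → ℝ)
    (hxt : ∀ x y : ℝ, (φ (xt x y + y) + φ (xt x y - y)) / 2 = x)
    (Ψ : EuclideanSpace ℝ (Fin 2) → EuclideanSpace ℝ (Fin 2))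
    (hΨ : ∀ p : EuclideanSpace ℝ (Fin 2),
      Ψ p = (WithLp.equiv 2 (Fin 2 → ℝ)).symm
        ![xt (p 0) (p 1), (φ (xt (p 0) (p 1) + p 1) - φ (xt (p 0) (p 1) - p 1)) / 2]) :
    Function.Bijective Ψ ∧ Continuous Ψ ∧
    (∀ p q : EuclideanSpace ℝ (Fin 2),
      dist (Ψ p) (Ψ q) ≤ 2 * L ^ 3 * dist p q ∧
      dist p q ≤ 2 * L ^ 3 * dist (Ψ p) (Ψ q)) ∧
    (∀ A : Set (EuclideanSpace ℝ (Fin 2)), MeasurableSet A →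
      volume (Ψ '' A) = volume A) ∧
    (∀ x : ℝ, Ψ ((WithLp.equiv 2 (Fin 2 → ℝ)).symm ![x, 0]) =
      (WithLp.equiv 2 (Fin 2 → ℝ)).symm ![ψ x, 0]) := by
  lift L to ℝ≥0 using zero_le_one.trans hL
  have hlip : LipschitzWith L φ := .of_dist_le_mul fun s t => (hbl s t).2
  have hanti : AntilipschitzWith L φ :=
    .of_le_mul_dist fun s t => (inv_mul_le_iff₀ (by positivity)).1 (hbl s t).1
  set σ : EuclideanSpace ℝ (Fin 2) → EuclideanSpace ℝ (Fin 2) :=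
    fun p => !₂[xt (p 0) (p 1) + p 1, xt (p 0) (p 1) - p 1]
  have hAσ : LeftInverse (halfSumDiff φ id) σ := fun p => by
    ext i; fin_cases i <;> simp [σ, hxt]
  have hσA : LeftInverse σ (halfSumDiff φ id) := fun p =>
    injective_halfSumDiff_id_right hL hlip hanti hmono (hAσ _)
  have hΨ_eq : Ψ = halfSumDiff id φ ∘ σ := funext fun p => by
    rw [hΨ]; ext i; fin_cases i <;> simp [σ]
  have hdist : ∀ p q, dist (Ψ p) (Ψ q) ≤ 2 * L ^ 3 * dist p q ∧
      dist p q ≤ 2 * L ^ 3 * dist (Ψ p) (Ψ q) := fun p q => by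
    simpa only [hΨ_eq, comp_apply, hAσ _] using
      And.intro (dist_halfSumDiff_id_left_le hL hlip hanti hmono (σ p) (σ q))
        (dist_halfSumDiff_id_right_le hL hlip hanti hmono (σ p) (σ q))
  refine ⟨?_, ?_, hdist, fun E hE => ?_, fun x => ?_⟩
  · rw [hΨ_eq]
    exact ⟨(injective_halfSumDiff_id_left hL hlip hanti hmono).comp hAσ.injective,
      (halfSumDiff_id_surjective hmono hlip.continuous hinv₂.surjective).comp hσA.surjective⟩
  · exact (LipschitzWith.of_dist_le_mul (K := 2 * L ^ 3) fun p q => by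
      push_cast; exact (hdist p q).1).continuous
  · rw [hΨ_eq]
    exact volume_image_halfSumDiff_id_left_comp hL hlip hanti hmono hAσ hE
  · have hxψ : xt x 0 = ψ x := by
      have hx : φ (xt x 0) = x := by simpa using hxt x 0
      rw [← hinv₁ (xt x 0), hx]
    rw [hΨ]
    ext i; fin_cases i <;> simp [hxψ]
end

section
/- Let φ be a piecewise linear orientation-preserving homeomorphism of [0,1] with φ(0)=0, φ(1)=1 and 1/C² ≤ φ'(x) ≤ C² almost everywhere. Then φ can be written as a composition of at most m(C) piecewise linear 3/2-biLipschitz orientation-preserving self-homeomorphisms of [0,1], where m(C) depends only on C (one can take m(C) of order log_{7/6}(C²)). -/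
/-! Interpolate linearly between the identity and `φ`: `ψ_t = (1 - t) • id + t • φ`. For
`t ∈ [0,1]` every `ψ_t` is again a piecewise linear homeomorphism of `[0,1]` with the same
bounds `1/C² ≤ ψ_t' ≤ C²`. Over any interval the increments of `ψ_a` and `ψ_b` differ by
`|a - b| · |Δφ - Δx|`, and `|Δφ - Δx| ≤ (C² - 1) · Δψ_b`, so for `|a - b| ≤ 1/m` with
`m > 3(C² - 1)` the map `ψ_a ∘ ψ_b⁻¹` is `3/2`-biLipschitz. Along `t_k = 1 - k/m` these maps
telescope to `ψ_1 ∘ ψ_0⁻¹ = φ`. -/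

open Set

/-- `f` is piecewise linear on `[0,1]`. -/
def PLOn (f : ℝ → ℝ) : Prop :=
  ∃ (n : ℕ) (t : Fin (n + 1) → ℝ), t 0 = 0 ∧ t (Fin.last n) = 1 ∧ Monotone t ∧
    ∀ i : Fin n, ∃ c d : ℝ, ∀ x ∈ Set.Icc (t i.castSucc) (t i.succ), f x = c * x + d

open Function

/-- For increasing `h`, the increments of `f` are within a factor `K` of those of `h`; with
`h = id` this is `K`-biLipschitz for an increasing `f`. -/
def RelBiLipOn (K : ℝ) (f h : ℝ → ℝ) (s : Set ℝ) : Prop :=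
  ∀ x ∈ s, ∀ y ∈ s, x ≤ y → (h y - h x) / K ≤ f y - f x ∧ f y - f x ≤ K * (h y - h x)

def AffineOn (f : ℝ → ℝ) (s : Set ℝ) : Prop :=
  ∃ c d : ℝ, ∀ x ∈ s, f x = c * x + d

def interp (φ : ℝ → ℝ) (t x : ℝ) : ℝ :=
  (1 - t) * x + t * φ x

namespace RelBiLipOn

variable {K : ℝ} {f h : ℝ → ℝ} {s : Set ℝ}

theorem strictMonoOn (hK : 0 < K) (hf : RelBiLipOn K f id s) : StrictMonoOn f s :=
  fun x hx y hy hxy => sub_pos.1 <| (div_pos (sub_pos.2 hxy) hK).trans_le (hf x hx y hy hxy.le).1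

theorem continuousOn (hK : 0 < K) (hf : RelBiLipOn K f id s) : ContinuousOn f s := by
  refine (LipschitzOnWith.of_le_add_mul' K fun x hx y hy => ?_).continuousOn
  rw [Real.dist_eq]
  rcases le_or_gt x y with hxy | hyx
  · have := (hf.strictMonoOn hK).monotoneOn hx hy hxy
    have := mul_nonneg hK.le (abs_nonneg (x - y))
    linarith
  · have := (hf y hy x hx hyx.le).2
    rw [abs_of_pos (sub_pos.2 hyx)]
    simp only [id] at this
    linarith

theorem mapsTo_Icc (hK : 0 < K) (hf : RelBiLipOn K f id (Icc 0 1)) (h0 : f 0 = 0)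
    (h1 : f 1 = 1) : MapsTo f (Icc 0 1) (Icc 0 1) := by
  simpa only [h0, h1] using ((hf.strictMonoOn hK).monotoneOn).mapsTo_Icc

theorem surjOn_Icc (hK : 0 < K) (hf : RelBiLipOn K f id (Icc 0 1)) (h0 : f 0 = 0)
    (h1 : f 1 = 1) : SurjOn f (Icc 0 1) (Icc 0 1) := by
  have := intermediate_value_Icc zero_le_one (hf.continuousOn hK)
  rwa [h0, h1] at this

theorem comp_invFunOn (hh : StrictMonoOn h s) (hsurj : SurjOn h s s) (hf : RelBiLipOn K f h s) :
    RelBiLipOn K (f ∘ invFunOn h s) id s := by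
  intro x hx y hy hxy
  have hu := invFunOn_mem (hsurj hx)
  have hxu := invFunOn_eq (hsurj hx)
  have hv := invFunOn_mem (hsurj hy)
  have hyv := invFunOn_eq (hsurj hy)
  have huv := (hh.le_iff_le hu hv).1 (by rwa [hxu, hyv])
  simpa only [comp_apply, id, hxu, hyv] using hf _ hu _ hv huv

end RelBiLipOn

theorem convex_comb_mem_uIcc {t : ℝ} (ht : t ∈ Icc 0 1) (a b : ℝ) :
    (1 - t) * a + t * b ∈ uIcc a b := by
  rw [← segment_eq_uIcc]
  exact ⟨1 - t, t, by linarith [ht.2], ht.1, by ring, by simp only [smul_eq_mul]⟩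

theorem abs_sub_le_mul_of_mem_uIcc {K Δ D e : ℝ} (hK : 1 ≤ K) (h1 : Δ / K ≤ D)
    (h2 : D ≤ K * Δ) (he : e ∈ uIcc Δ D) : |D - Δ| ≤ (K - 1) * e := by
  have h1' : Δ ≤ K * D := by rwa [div_le_iff₀ (by linarith), mul_comm] at h1
  rcases mem_uIcc.1 he with ⟨hΔe, heD⟩ | ⟨hDe, heΔ⟩
  · rw [abs_of_nonneg (by linarith)]
    nlinarith
  · rw [abs_of_nonpos (by linarith)]
    nlinarith

section Interp

variable {φ : ℝ → ℝ} {K a b : ℝ} {s : Set ℝ}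

@[simp]
theorem interp_zero_apply (φ : ℝ → ℝ) (x : ℝ) : interp φ 0 x = x := by
  simp [interp]

@[simp]
theorem interp_one_apply (φ : ℝ → ℝ) (x : ℝ) : interp φ 1 x = φ x := by
  simp [interp]

theorem interp_of_apply_eq {x : ℝ} (hx : φ x = x) (t : ℝ) : interp φ t x = x := by
  rw [interp, hx]
  ring

theorem interp_sub_interp (φ : ℝ → ℝ) (t x y : ℝ) :
    interp φ t y - interp φ t x = (1 - t) * (y - x) + t * (φ y - φ x) := by
  unfold interp
  ring

theorem RelBiLipOn.interp (hK : 1 ≤ K) (hφ : RelBiLipOn K φ id s) (hb : b ∈ Icc 0 1) :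
    RelBiLipOn K (interp φ b) id s := by
  intro x hx y hy hxy
  obtain ⟨hD1, hD2⟩ := hφ x hx y hy hxy
  have hΔ1 : (y - x) / K ≤ y - x := div_le_self (sub_nonneg.2 hxy) hK
  have hΔ2 : y - x ≤ K * (y - x) := le_mul_of_one_le_left (sub_nonneg.2 hxy) hK
  simp only [id] at hD1 hD2 ⊢
  rw [interp_sub_interp]
  rcases mem_uIcc.1 (convex_comb_mem_uIcc hb (y - x) (φ y - φ x)) with ⟨_, _⟩ | ⟨_, _⟩ <;>
    constructor <;> linarith

theorem relBiLipOn_interp_interp (hK : 1 ≤ K) (hφ : RelBiLipOn K φ id s)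
    (hb : b ∈ Icc 0 1) (hab : |a - b| * (K - 1) ≤ 1 / 3) :
    RelBiLipOn (3 / 2) (interp φ a) (interp φ b) s := by
  intro x hx y hy hxy
  obtain ⟨hD1, hD2⟩ := hφ x hx y hy hxy
  simp only [id] at hD1 hD2
  rw [interp_sub_interp, interp_sub_interp]
  set Δ := y - x
  set D := φ y - φ x
  set e := (1 - b) * Δ + b * D
  have hmem : e ∈ uIcc Δ D := convex_comb_mem_uIcc hb Δ D
  have he : 0 ≤ e := by
    have : 0 ≤ Δ / K := div_nonneg (sub_nonneg.2 hxy) (by linarith)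
    rcases mem_uIcc.1 hmem with ⟨_, _⟩ | ⟨_, _⟩ <;> linarith
  have hclose : |((1 - a) * Δ + a * D) - e| ≤ e / 3 :=
    calc |((1 - a) * Δ + a * D) - e|
        = |a - b| * |D - Δ| := by
          rw [← abs_mul]
          congr 1
          ring
      _ ≤ |a - b| * ((K - 1) * e) := by
          gcongr
          exact abs_sub_le_mul_of_mem_uIcc hK hD1 hD2 hmem
      _ = (|a - b| * (K - 1)) * e := by ring
      _ ≤ 1 / 3 * e := by gcongr
      _ = e / 3 := by ring
  rw [abs_le] at hclose
  constructor <;> linarith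

end Interp

theorem AffineOn.interp {φ : ℝ → ℝ} {s : Set ℝ} (hφ : AffineOn φ s) (t : ℝ) :
    AffineOn (interp φ t) s :=
  let ⟨c, d, h⟩ := hφ
  ⟨1 - t + t * c, t * d, fun x hx => by rw [_root_.interp, h x hx]; ring⟩

theorem AffineOn.comp_of_rightInvOn {f g h : ℝ → ℝ} {p q : ℝ} (hf : AffineOn f (Icc p q))
    (hh : AffineOn h (Icc p q)) (hmono : StrictMonoOn h (Icc p q))
    (hg : MapsTo g (Icc (h p) (h q)) (Icc p q)) (hgh : RightInvOn g h (Icc (h p) (h q))) :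
    AffineOn (f ∘ g) (Icc (h p) (h q)) := by
  obtain ⟨c, d, hf⟩ := hf
  obtain ⟨c', d', hh⟩ := hh
  rcases lt_or_ge p q with hpq | hqp
  · have hc' : c' ≠ 0 := by
      have := hmono (left_mem_Icc.2 hpq.le) (right_mem_Icc.2 hpq.le) hpq
      rw [hh p (left_mem_Icc.2 hpq.le), hh q (right_mem_Icc.2 hpq.le)] at this
      rintro rfl
      linarith
    refine ⟨c / c', d - c * d' / c', fun x hx => ?_⟩
    have hgx : g x = (x - d') / c' := by
      have hx' := hgh hx
      rw [hh _ (hg hx)] at hx'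
      rw [eq_div_iff hc']
      linarith
    rw [comp_apply, hf _ (hg hx), hgx]
    field_simp
    ring
  · -- a degenerate piece: `g` sends all of `Icc (h p) (h q)` to the point `p`
    refine ⟨0, f p, fun x hx => ?_⟩
    have : g x = p := le_antisymm ((hg hx).2.trans hqp) (hg hx).1
    rw [comp_apply, this, zero_mul, zero_add]

theorem PLOn.interp_comp_invFunOn {φ : ℝ → ℝ} {a b : ℝ} (hφ : PLOn φ) (h0 : φ 0 = 0)
    (h1 : φ 1 = 1) (hmono : StrictMonoOn (interp φ b) (Icc 0 1))
    (hsurj : SurjOn (interp φ b) (Icc 0 1) (Icc 0 1)) :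
    PLOn (interp φ a ∘ invFunOn (interp φ b) (Icc 0 1)) := by
  obtain ⟨n, t, ht0, htn, htm, hpieces⟩ := hφ
  set h := interp φ b
  have ht : ∀ j, t j ∈ Icc 0 1 := fun j =>
    ⟨ht0 ▸ htm (Fin.zero_le j), htn ▸ htm (Fin.le_last j)⟩
  have hh0 : h 0 = 0 := interp_of_apply_eq h0 b
  have hh1 : h 1 = 1 := interp_of_apply_eq h1 b
  refine ⟨n, h ∘ t, by simp only [comp_apply, ht0, hh0], by simp only [comp_apply, htn, hh1],
    fun i j hij => hmono.monotoneOn (ht i) (ht j) (htm hij), fun j => ?_⟩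
  have hsub : Icc (t j.castSucc) (t j.succ) ⊆ Icc 0 1 := Icc_subset_Icc (ht _).1 (ht _).2
  have himage : Icc (h (t j.castSucc)) (h (t j.succ)) ⊆ Icc 0 1 := by
    refine Icc_subset_Icc ?_ ?_
    · exact hh0 ▸ hmono.monotoneOn (left_mem_Icc.2 zero_le_one) (ht _) (ht _).1
    · exact hh1 ▸ hmono.monotoneOn (ht _) (right_mem_Icc.2 zero_le_one) (ht _).2
  refine AffineOn.comp_of_rightInvOn (AffineOn.interp (hpieces j) a)
    (AffineOn.interp (hpieces j) b) (hmono.mono hsub) (fun x hx => ?_)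
    (fun x hx => invFunOn_eq (hsurj (himage hx)))
  have hu := invFunOn_mem (hsurj (himage hx))
  have hxu := invFunOn_eq (hsurj (himage hx))
  rw [← hxu] at hx
  exact ⟨(hmono.le_iff_le (ht _) hu).1 hx.1, (hmono.le_iff_le hu (ht _)).1 hx.2⟩

theorem foldr_ofFn_comp_eq {α : Type*} {s : Set α} {F G : ℕ → α → α} {m : ℕ}
    (hFG : ∀ k ≤ m, LeftInvOn (G k) (F k) s) {x : α} (hx : x ∈ s) :
    (List.ofFn fun i : Fin m => F i ∘ G (i + 1)).foldr (· ∘ ·) id (F m x) = F 0 x := by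
  induction m generalizing F G with
  | zero => rfl
  | succ m ih =>
    rw [List.ofFn_succ, List.foldr_cons]
    have htail := ih (F := fun k => F (k + 1)) (G := fun k => G (k + 1))
      (fun k hk => hFG (k + 1) (by omega))
    simp only [Fin.val_succ, Fin.val_zero, comp_apply] at htail ⊢
    rw [htail, hFG 1 (by omega) hx]

theorem one_sub_div_mem_Icc {k m : ℕ} (hk : k ≤ m) : 1 - (k : ℝ) / m ∈ Icc 0 1 :=
  ⟨sub_nonneg.2 (div_le_one_of_le₀ (by exact_mod_cast hk) m.cast_nonneg),
    sub_le_self _ (by positivity)⟩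

theorem abs_one_sub_div_sub_one_sub_div_succ (k m : ℕ) :
    |(1 - (k : ℝ) / m) - (1 - ((k + 1 : ℕ) : ℝ) / m)| = 1 / m := by
  rw [abs_of_nonneg (by push_cast; ring_nf; positivity)]
  push_cast
  ring

def IsPLBiLipHomeo (g : ℝ → ℝ) : Prop :=
  PLOn g ∧ g 0 = 0 ∧ g 1 = 1 ∧ MapsTo g (Icc 0 1) (Icc 0 1) ∧
    ∀ x ∈ Icc (0 : ℝ) 1, ∀ y ∈ Icc (0 : ℝ) 1, x ≤ y →
      (2 / 3) * (y - x) ≤ g y - g x ∧ g y - g x ≤ (3 / 2) * (y - x)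

theorem isPLBiLipHomeo_interp_comp_invFunOn {φ : ℝ → ℝ} {K a b : ℝ} (hφ : PLOn φ)
    (h0 : φ 0 = 0) (h1 : φ 1 = 1) (hK : 1 ≤ K) (H : RelBiLipOn K φ id (Icc 0 1))
    (hb : b ∈ Icc 0 1) (hab : |a - b| * (K - 1) ≤ 1 / 3) :
    IsPLBiLipHomeo (interp φ a ∘ invFunOn (interp φ b) (Icc 0 1)) := by
  have hK0 : 0 < K := by linarith
  have hψ := H.interp hK hb
  have hψ0 : interp φ b 0 = 0 := interp_of_apply_eq h0 b
  have hψ1 : interp φ b 1 = 1 := interp_of_apply_eq h1 b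
  have hmono := hψ.strictMonoOn hK0
  have hsurj := hψ.surjOn_Icc hK0 hψ0 hψ1
  have hg := (relBiLipOn_interp_interp hK H hb hab).comp_invFunOn hmono hsurj
  have hinv0 := hmono.injOn.leftInvOn_invFunOn (left_mem_Icc.2 zero_le_one)
  have hinv1 := hmono.injOn.leftInvOn_invFunOn (right_mem_Icc.2 zero_le_one)
  rw [hψ0] at hinv0
  rw [hψ1] at hinv1
  have hg0 : (interp φ a ∘ invFunOn (interp φ b) (Icc 0 1)) 0 = 0 := by
    rw [comp_apply, hinv0, interp_of_apply_eq h0]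
  have hg1 : (interp φ a ∘ invFunOn (interp φ b) (Icc 0 1)) 1 = 1 := by
    rw [comp_apply, hinv1, interp_of_apply_eq h1]
  refine ⟨hφ.interp_comp_invFunOn h0 h1 hmono hsurj, hg0, hg1,
    hg.mapsTo_Icc (by norm_num) hg0 hg1, fun x hx y hy hxy => ?_⟩
  obtain ⟨hlow, hup⟩ := hg x hx y hy hxy
  simp only [id] at hlow hup
  constructor <;> linarith

theorem stmt9_general (C : ℝ) :
    ∃ m₀ : ℕ, ∀ φ : ℝ → ℝ, PLOn φ → φ 0 = 0 → φ 1 = 1 →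
      (∀ x ∈ Set.Icc (0 : ℝ) 1, ∀ y ∈ Set.Icc (0 : ℝ) 1, x ≤ y →
        (y - x) / C ^ 2 ≤ φ y - φ x ∧ φ y - φ x ≤ C ^ 2 * (y - x)) →
      ∃ (n : ℕ) (g : Fin n → ℝ → ℝ), n ≤ m₀ ∧
        (∀ i, PLOn (g i) ∧ g i 0 = 0 ∧ g i 1 = 1 ∧
          Set.MapsTo (g i) (Set.Icc (0 : ℝ) 1) (Set.Icc (0 : ℝ) 1) ∧
          ∀ x ∈ Set.Icc (0 : ℝ) 1, ∀ y ∈ Set.Icc (0 : ℝ) 1, x ≤ y →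
            (2 / 3) * (y - x) ≤ g i y - g i x ∧ g i y - g i x ≤ (3 / 2) * (y - x)) ∧
        ∀ x ∈ Set.Icc (0 : ℝ) 1, φ x = (List.ofFn g).foldr (· ∘ ·) id x := by
  refine ⟨⌈3 * (C ^ 2 - 1)⌉₊ + 1, fun φ hφ h0 h1 H => ?_⟩
  replace H : RelBiLipOn (C ^ 2) φ id (Icc 0 1) := H
  set m := ⌈3 * (C ^ 2 - 1)⌉₊ + 1
  have hK : 1 ≤ C ^ 2 := by
    have := (H 0 (left_mem_Icc.2 zero_le_one) 1 (right_mem_Icc.2 zero_le_one) zero_le_one).2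
    simpa [h0, h1] using this
  have hm : 3 * (C ^ 2 - 1) < m := by
    simp only [m]
    push_cast
    linarith [Nat.le_ceil (3 * (C ^ 2 - 1))]
  set t : ℕ → ℝ := fun k => 1 - k / m
  have hstep : ∀ k, |t k - t (k + 1)| * (C ^ 2 - 1) ≤ 1 / 3 := fun k => by
    rw [abs_one_sub_div_sub_one_sub_div_succ, one_div_mul_eq_div, div_le_iff₀ (by linarith)]
    linarith
  have hinj : ∀ k ≤ m, InjOn (interp φ (t k)) (Icc 0 1) := fun k hk =>
    ((H.interp hK (one_sub_div_mem_Icc hk)).strictMonoOn (by linarith)).injOn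
  refine ⟨m, fun i => interp φ (t i) ∘ invFunOn (interp φ (t (i + 1))) (Icc 0 1), le_rfl,
    fun i => isPLBiLipHomeo_interp_comp_invFunOn hφ h0 h1 hK H (one_sub_div_mem_Icc i.isLt)
      (hstep i), fun x hx => ?_⟩
  have htelescope := foldr_ofFn_comp_eq (F := fun k => interp φ (t k))
    (G := fun k => invFunOn (interp φ (t k)) (Icc 0 1))
    (fun k hk => (hinj k hk).leftInvOn_invFunOn) hx
  have htm : t m = 0 := by simp [t]
  have ht0 : t 0 = 1 := by simp [t]
  simp only [htm, ht0, interp_zero_apply, interp_one_apply] at htelescope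
  exact htelescope.symm

/-- Any piecewise linear orientation-preserving self-homeomorphism `φ` of `[0,1]` with
`1/C² ≤ φ' ≤ C²` a.e. is a composition of at most `m(C)` piecewise linear
`3/2`-biLipschitz orientation-preserving self-homeomorphisms of `[0,1]`, where `m(C)`
depends only on `C`. -/
theorem stmt9 (C : ℝ) (hC : 1 ≤ C) :
    ∃ m₀ : ℕ, ∀ φ : ℝ → ℝ, PLOn φ → φ 0 = 0 → φ 1 = 1 →
      (∀ x ∈ Set.Icc (0 : ℝ) 1, ∀ y ∈ Set.Icc (0 : ℝ) 1, x ≤ y →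
        (y - x) / C ^ 2 ≤ φ y - φ x ∧ φ y - φ x ≤ C ^ 2 * (y - x)) →
      ∃ (n : ℕ) (g : Fin n → ℝ → ℝ), n ≤ m₀ ∧
        (∀ i, PLOn (g i) ∧ g i 0 = 0 ∧ g i 1 = 1 ∧
          Set.MapsTo (g i) (Set.Icc (0 : ℝ) 1) (Set.Icc (0 : ℝ) 1) ∧
          ∀ x ∈ Set.Icc (0 : ℝ) 1, ∀ y ∈ Set.Icc (0 : ℝ) 1, x ≤ y →
            (2 / 3) * (y - x) ≤ g i y - g i x ∧ g i y - g i x ≤ (3 / 2) * (y - x)) ∧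
        ∀ x ∈ Set.Icc (0 : ℝ) 1, φ x = (List.ofFn g).foldr (· ∘ ·) id x :=
  stmt9_general C
end
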